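/- arXiv:2603.01967 — 2 statements merged into one kernel-verified Lean document; each statement's English description precedes it below -/
import Mathlib

section
/- Let G be a minimally nonperfectly divisible graph. Then G has no nonempty basin: for every nonempty X ⊆ V(G), ω(G[N[X]]) = ω(G). -/
open SimpleGraph

variable {V : Type}

/-- The clique number of the subgraph of `G` induced on `S`. -/
noncomputable def omegaOn (G : SimpleGraph V) (S : Set V) : ℕ :=
  sSup {n | ∃ s : Finset V, ↑s ⊆ S ∧ G.IsNClique n s}

/-- The subgraph of `G` induced on `S` is a perfect graph. -/
def IsPerfectOn (G : SimpleGraph V) (S : Set V) : Prop :=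
  ∀ T : Set V, T ⊆ S → (G.induce T).chromaticNumber = (omegaOn G T : ℕ∞)

/-- Every nonempty induced subgraph of `G[S]` admits a perfect division. -/
def PerfDivOn (G : SimpleGraph V) (S : Set V) : Prop :=
  ∀ H : Set V, H ⊆ S → H.Nonempty →
    ∃ A B : Set V, A ∪ B = H ∧ Disjoint A B ∧
      IsPerfectOn G A ∧ omegaOn G B < omegaOn G H

/-- `G` is minimally nonperfectly divisible. -/
def MNPD (G : SimpleGraph V) : Prop :=
  ¬ PerfDivOn G Set.univ ∧ ∀ S : Set V, S ≠ Set.univ → PerfDivOn G S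

/-- The external neighbourhood `N(X)`. -/
def extNbhd (G : SimpleGraph V) (X : Set V) : Set V :=
  {v | v ∉ X ∧ ∃ x ∈ X, G.Adj v x}

lemma omega_bdd [Fintype V] (G : SimpleGraph V) (S : Set V) :
    BddAbove {n | ∃ s : Finset V, ↑s ⊆ S ∧ G.IsNClique n s} := by
  refine ⟨Fintype.card V, ?_⟩
  rintro n ⟨s, -, hs⟩
  rw [← hs.2]
  exact s.card_le_univ.trans_eq (Finset.card_univ)

lemma omega_zero_mem (G : SimpleGraph V) (S : Set V) :
    0 ∈ {n | ∃ s : Finset V, ↑s ⊆ S ∧ G.IsNClique n s} :=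
  ⟨∅, by simp, by simp [SimpleGraph.isNClique_empty]⟩

lemma omegaOn_mono [Fintype V] (G : SimpleGraph V) {S T : Set V} (h : S ⊆ T) :
    omegaOn G S ≤ omegaOn G T := by
  apply csSup_le_csSup (omega_bdd G T) ⟨0, omega_zero_mem G S⟩
  rintro n ⟨s, hsS, hs⟩
  exact ⟨s, hsS.trans h, hs⟩

lemma clique_le_omegaOn [Fintype V] (G : SimpleGraph V) {S : Set V} {s : Finset V} {n : ℕ}
    (hsS : ↑s ⊆ S) (hs : G.IsNClique n s) : n ≤ omegaOn G S :=
  le_csSup (omega_bdd G S) ⟨s, hsS, hs⟩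

lemma exists_max_clique [Fintype V] (G : SimpleGraph V) (S : Set V) :
    ∃ s : Finset V, ↑s ⊆ S ∧ G.IsNClique (omegaOn G S) s :=
  Nat.sSup_mem ⟨0, omega_zero_mem G S⟩ (omega_bdd G S)

theorem stmt_4 [Fintype V] (G : SimpleGraph V) (hG : MNPD G) :
    ∀ X : Set V, X.Nonempty → omegaOn G (X ∪ extNbhd G X) = omegaOn G Set.univ := by
  intro X hX
  by_cases hXu : X = Set.univ
  · subst hXu; simp [Set.univ_union]
  · by_contra hne
    have hlt : omegaOn G (X ∪ extNbhd G X) < omegaOn G Set.univ :=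
      lt_of_le_of_ne (omegaOn_mono G (Set.subset_univ _)) hne
    have hcne : Xᶜ ≠ Set.univ := by
      obtain ⟨x, hx⟩ := hX
      intro h
      have : x ∈ Xᶜ := h ▸ Set.mem_univ x
      exact this hx
    have hcnonempty : Xᶜ.Nonempty := by
      rw [Set.nonempty_compl]; exact hXu
    obtain ⟨A, B, hAB, hdis, hperf, homega⟩ :=
      hG.2 Xᶜ hcne Xᶜ subset_rfl hcnonempty
    apply hG.1
    intro H hH hHne
    by_cases hHu : H = Set.univ
    · subst hHu
      refine ⟨A, B ∪ X, ?_, ?_, hperf, ?_⟩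
      · rw [← Set.union_assoc, hAB, Set.compl_union_self]
      · have hAX : Disjoint A X := by
          have hA : A ⊆ Xᶜ := hAB ▸ Set.subset_union_left
          exact disjoint_compl_left.mono_left hA
        exact Set.disjoint_union_right.mpr ⟨hdis, hAX⟩
      · obtain ⟨s, hsS, hclq⟩ := exists_max_clique G (B ∪ X)
        by_cases hmix : ∃ x ∈ s, x ∈ X
        · obtain ⟨x, hxs, hxX⟩ := hmix
          have hsub : ↑s ⊆ X ∪ extNbhd G X := by
            intro v hv
            by_cases hvX : v ∈ X
            · exact Or.inl hvX
            · refine Or.inr ⟨hvX, x, hxX, ?_⟩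
              exact hclq.1 hv hxs (by rintro rfl; exact hvX hxX)
          calc omegaOn G (B ∪ X) ≤ omegaOn G (X ∪ extNbhd G X) :=
                clique_le_omegaOn G hsub hclq
            _ < omegaOn G Set.univ := hlt
        · push_neg at hmix
          have hsub : ↑s ⊆ B := by
            intro v hv
            rcases hsS hv with h | h
            · exact h
            · exact absurd h (hmix v hv)
          calc omegaOn G (B ∪ X) ≤ omegaOn G B := clique_le_omegaOn G hsub hclq
            _ < omegaOn G Xᶜ := homega
            _ ≤ omegaOn G Set.univ := omegaOn_mono G (Set.subset_univ _)
    · exact hG.2 H hHu H subset_rfl hHne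
end

section
/- Every minimally nonperfectly divisible triangle-free graph contains no clique cutset. -/
open SimpleGraph

variable {V : Type}

/-! A triangle-free graph is perfectly divisible exactly when it is 3-colourable: a perfect part
has clique number at most 2 and hence is bipartite, a part of smaller clique number is stable, and
conversely two colour classes form a bipartite (so perfect) part while the third is stable.
If a clique `X` separates a part `C` of `G - X` from the rest, the proper induced subgraphs
`G[C ∪ X]` and `G - C` are perfectly divisible by minimality, hence 3-colourable. Both colourings
are injective on the clique `X`, so after permuting colours they agree on `X` and glue to a
3-colouring of `G`, which makes `G` perfectly divisible. -/

section omegaOn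

variable {G : SimpleGraph V} {S : Set V}

lemma omegaOn_le {m : ℕ} (h : ∀ n (s : Finset V), ↑s ⊆ S → G.IsNClique n s → n ≤ m) :
    omegaOn G S ≤ m :=
  csSup_le ⟨0, ∅, by simp, by simp⟩ fun n ⟨s, hsS, hs⟩ => h n s hsS hs

lemma omegaOn_le_of_cliqueFree {k : ℕ} (hG : G.CliqueFree (k + 1)) : omegaOn G S ≤ k :=
  omegaOn_le fun n s _ hs => by
    by_contra! hn
    exact hG.mono hn s hs

lemma omegaOn_le_one (hS : ∀ u ∈ S, ∀ v ∈ S, ¬ G.Adj u v) : omegaOn G S ≤ 1 :=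
  omegaOn_le fun n s hsS hs => by
    by_contra! hn
    obtain ⟨u, hu, v, hv, huv⟩ := Finset.one_lt_card.1 (hs.card_eq ▸ hn)
    exact hS u (hsS hu) v (hsS hv) (hs.isClique hu hv huv)

lemma le_omegaOn {k n : ℕ} (hG : G.CliqueFree k) {s : Finset V} (hsS : ↑s ⊆ S)
    (hs : G.IsNClique n s) : n ≤ omegaOn G S :=
  le_csSup ⟨k, by
    rintro m ⟨t, -, ht⟩
    by_contra! hm
    exact hG.mono hm.le t ht⟩ ⟨s, hsS, hs⟩

lemma one_le_omegaOn {k : ℕ} (hG : G.CliqueFree k) {u : V} (hu : u ∈ S) : 1 ≤ omegaOn G S :=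
  le_omegaOn hG (s := {u}) (by simpa using hu) (isNClique_singleton.2 rfl)

lemma two_le_omegaOn {k : ℕ} (hG : G.CliqueFree k) {u v : V} (hu : u ∈ S) (hv : v ∈ S)
    (huv : G.Adj u v) : 2 ≤ omegaOn G S := by
  classical
  exact le_omegaOn hG (s := {u, v}) (by simp [Set.insert_subset_iff, hu, hv])
    ⟨by simpa using isClique_pair.2 fun _ => huv, Finset.card_pair huv.ne⟩

lemma omegaOn_le_chromaticNumber : (omegaOn G S : ℕ∞) ≤ (G.induce S).chromaticNumber := by
  classical
  by_cases hbdd : BddAbove {n | ∃ s : Finset V, ↑s ⊆ S ∧ G.IsNClique n s}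
  · obtain ⟨s, hsS, hs⟩ := Nat.sSup_mem (s := {n | ∃ s : Finset V, ↑s ⊆ S ∧ G.IsNClique n s})
      ⟨0, ∅, by simp, by simp⟩ hbdd
    have hclique : (G.induce S).IsClique (s.subtype (· ∈ S) : Set S) := by
      intro x hx y hy hxy
      rw [Finset.mem_coe, Finset.mem_subtype] at hx hy
      exact hs.isClique hx hy (Subtype.coe_ne_coe.2 hxy)
    have hcard : (s.subtype (· ∈ S)).card = omegaOn G S := by
      rw [Finset.card_subtype, Finset.filter_true_of_mem fun x hx => hsS hx, hs.card_eq]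
      rfl
    exact hcard ▸ hclique.card_le_chromaticNumber
  · -- `sSup` of an unbounded set of naturals is `0`
    simp [omegaOn, csSup_of_not_bddAbove hbdd]

end omegaOn

def IsColoringOn {α : Type*} (G : SimpleGraph V) (S : Set V) (c : V → α) : Prop :=
  ∀ ⦃u⦄, u ∈ S → ∀ ⦃v⦄, v ∈ S → G.Adj u v → c u ≠ c v

section coloring

variable {G : SimpleGraph V} {S : Set V}

lemma IsColoringOn.colorable {c : V → ℕ} {n : ℕ} (hc : IsColoringOn G S c)
    (hlt : ∀ v ∈ S, c v < n) : (G.induce S).Colorable n :=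
  (colorable_iff_exists_bdd_nat_coloring n).2
    ⟨Coloring.mk (fun v => c v) fun {u v} huv => hc u.2 v.2 huv, fun v => hlt v v.2⟩

lemma isPerfectOn_of_colorable_two (hG : G.CliqueFree 3) {A : Set V}
    (hA : (G.induce A).Colorable 2) : IsPerfectOn G A := by
  classical
  intro T hTA
  refine le_antisymm ?_ omegaOn_le_chromaticNumber
  have hT : (G.induce T).Colorable 2 := hA.of_hom (induceHomOfLE G hTA).toHom
  suffices (G.induce T).Colorable (omegaOn G T) from this.chromaticNumber_le
  match h : omegaOn G T with
  | 0 => exact colorable_zero_iff.2 ⟨fun u => (one_le_omegaOn hG u.2).not_gt (by omega)⟩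
  | 1 =>
    refine colorable_one_iff.2 (eq_bot_iff_forall_not_adj.2 fun u v huv => ?_)
    exact (two_le_omegaOn hG u.2 v.2 huv).not_gt (by omega)
  | k + 2 => exact hT.mono (by omega)

lemma perfDivOn_of_isColoringOn (hG : G.CliqueFree 3) {c : V → Fin 3}
    (hc : IsColoringOn G S c) : PerfDivOn G S := by
  classical
  intro H hHS ⟨u, hu⟩
  by_cases hedge : ∃ v ∈ H, ∃ w ∈ H, G.Adj v w
  · obtain ⟨v, hv, w, hw, hvw⟩ := hedge
    refine ⟨{x ∈ H | c x ≠ 2}, {x ∈ H | c x = 2}, ?_, ?_, ?_, ?_⟩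
    · ext x
      by_cases hx : c x = 2 <;> simp [hx]
    · exact Set.disjoint_left.2 fun x hx hx' => hx.2 hx'.2
    · refine isPerfectOn_of_colorable_two hG
        (IsColoringOn.colorable (c := fun x => c x) ?_ ?_)
      · exact fun x hx y hy hxy hcxy => hc (hHS hx.1) (hHS hy.1) hxy (Fin.ext hcxy)
      · exact fun x hx => by have := Fin.val_ne_of_ne hx.2; omega
    · calc omegaOn G {x ∈ H | c x = 2} ≤ 1 :=
            omegaOn_le_one fun x hx y hy hxy =>
              hc (hHS hx.1) (hHS hy.1) hxy (hx.2.trans hy.2.symm)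
        _ < 2 := one_lt_two
        _ ≤ omegaOn G H := two_le_omegaOn hG hv hw hvw
  · refine ⟨H, ∅, by simp, by simp, ?_, ?_⟩
    · exact isPerfectOn_of_colorable_two hG <| IsColoringOn.colorable (c := fun _ => 0)
        (fun x hx y hy hxy => absurd ⟨x, hx, y, hy, hxy⟩ hedge) fun _ _ => two_pos
    · calc omegaOn G ∅ = 0 := Nat.le_zero.1 (omegaOn_le fun n s hs _ => by simp_all)
        _ < omegaOn G H := one_le_omegaOn hG hu

lemma exists_isColoringOn_of_perfDivOn (hG : G.CliqueFree 3) (h : PerfDivOn G S) :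
    ∃ c : V → Fin 3, IsColoringOn G S c := by
  classical
  rcases S.eq_empty_or_nonempty with rfl | hS
  · exact ⟨fun _ => 0, fun u hu => hu.elim⟩
  obtain ⟨A, B, hAB, -, hA, hB⟩ := h S subset_rfl hS
  have hBstable : ∀ u ∈ B, ∀ v ∈ B, ¬ G.Adj u v := fun u hu v hv huv =>
    (two_le_omegaOn hG hu hv huv).not_gt (hB.trans_le (omegaOn_le_of_cliqueFree hG))
  obtain ⟨C⟩ : (G.induce A).Colorable 2 := by
    rw [← chromaticNumber_le_iff_colorable, hA A subset_rfl]
    exact_mod_cast omegaOn_le_of_cliqueFree hG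
  refine ⟨fun v => if hv : v ∈ A then (C ⟨v, hv⟩).castSucc else Fin.last 2, ?_⟩
  intro u hu v hv huv
  by_cases huA : u ∈ A <;> by_cases hvA : v ∈ A <;> simp only [huA, hvA, dite_true, dite_false]
  · exact fun h => C.valid (show (G.induce A).Adj ⟨u, huA⟩ ⟨v, hvA⟩ from huv)
      (Fin.castSucc_injective _ h)
  · exact Fin.castSucc_ne_last _
  · exact (Fin.castSucc_ne_last _).symm
  · have hu' : u ∈ A ∪ B := hAB ▸ hu
    have hv' : v ∈ A ∪ B := hAB ▸ hv
    exact absurd huv (hBstable u (hu'.resolve_left huA) v (hv'.resolve_left hvA))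

lemma Equiv.Perm.exists_eqOn_of_injOn {α β : Type*} [Finite β] {X : Set α} {f g : α → β}
    (hf : X.InjOn f) (hg : X.InjOn g) : ∃ σ : Equiv.Perm β, ∀ x ∈ X, σ (g x) = f x := by
  classical
  let e : g '' X ≃ f '' X :=
    (Equiv.Set.imageOfInjOn g X hg).symm.trans (Equiv.Set.imageOfInjOn f X hf)
  refine ⟨e.extendSubtype, fun x hx => ?_⟩
  rw [Equiv.extendSubtype_apply_of_mem e _ (Set.mem_image_of_mem g hx)]
  have : (Equiv.Set.imageOfInjOn g X hg).symm ⟨g x, Set.mem_image_of_mem g hx⟩ = ⟨x, hx⟩ :=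
    (Equiv.symm_apply_eq _).2 rfl
  simp only [e, Equiv.trans_apply, this]
  rfl

lemma IsColoringOn.injOn_of_isClique {α : Type*} {c : V → α} (hc : IsColoringOn G S c)
    {X : Set V} (hXS : X ⊆ S) (hX : G.IsClique X) : X.InjOn c := fun _ hx _ hy =>
  not_imp_not.1 fun hxy => hc (hXS hx) (hXS hy) (hX hx hy hxy)

lemma IsColoringOn.exists_union {n : ℕ} {T : Set V} {c₁ c₂ : V → Fin n}
    (h₁ : IsColoringOn G S c₁) (h₂ : IsColoringOn G T c₂) (hST : G.IsClique (S ∩ T))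
    (hsep : ∀ u ∈ S \ T, ∀ v ∈ T \ S, ¬ G.Adj u v) :
    ∃ c : V → Fin n, IsColoringOn G (S ∪ T) c := by
  classical
  obtain ⟨σ, hσ⟩ := Equiv.Perm.exists_eqOn_of_injOn
    (h₁.injOn_of_isClique Set.inter_subset_left hST)
    (h₂.injOn_of_isClique Set.inter_subset_right hST)
  have hcross : ∀ ⦃u v⦄, u ∈ S → v ∈ T → v ∉ S → G.Adj u v → c₁ u ≠ σ (c₂ v) := by
    intro u v hu hv hvS huv
    have huT : u ∈ T := by_contra fun huT => hsep u ⟨hu, huT⟩ v ⟨hv, hvS⟩ huv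
    rw [← hσ u ⟨hu, huT⟩]
    exact σ.injective.ne (h₂ huT hv huv)
  refine ⟨fun v => if v ∈ S then c₁ v else σ (c₂ v), ?_⟩
  intro u hu v hv huv
  by_cases huS : u ∈ S <;> by_cases hvS : v ∈ S <;> simp only [huS, hvS, if_true, if_false]
  · exact h₁ huS hvS huv
  · exact hcross huS (hv.resolve_left hvS) hvS huv
  · exact (hcross hvS (hu.resolve_left huS) huS huv.symm).symm
  · exact σ.injective.ne (h₂ (hu.resolve_left huS) (hv.resolve_left hvS) huv)

end coloring

lemma SimpleGraph.exists_separation_of_not_preconnected_induce {G : SimpleGraph V} {S : Set V}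
    (h : ¬ (G.induce S).Preconnected) :
    ∃ C ⊆ S, C.Nonempty ∧ (S \ C).Nonempty ∧ ∀ u ∈ C, ∀ v ∈ S \ C, ¬ G.Adj u v := by
  obtain ⟨a, b, hab⟩ : ∃ a b : S, ¬ (G.induce S).Reachable a b := by
    simpa [Preconnected] using h
  refine ⟨Subtype.val '' {v | (G.induce S).Reachable a v}, by simp, ⟨a, a, Reachable.rfl, rfl⟩,
    ⟨b, b.2, ?_⟩, ?_⟩
  · rintro ⟨b', hb', hb'b⟩
    exact hab (Subtype.ext hb'b ▸ hb')
  · rintro _ ⟨u, hu, rfl⟩ v ⟨hvS, hvC⟩ huv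
    have huv' : (G.induce S).Adj u ⟨v, hvS⟩ := huv
    exact hvC ⟨⟨v, hvS⟩, hu.trans huv'.reachable, rfl⟩

theorem stmt_10_general (G : SimpleGraph V) (hG : MNPD G)
    (htf : G.CliqueFree 3) :
    ¬ ∃ X : Set V, G.IsClique X ∧ ¬ (G.induce Xᶜ).Preconnected := by
  rintro ⟨X, hX, hdisc⟩
  obtain ⟨C, -, ⟨a, ha⟩, ⟨b, hbX, hbC⟩, hsep⟩ :=
    exists_separation_of_not_preconnected_induce hdisc
  obtain ⟨c₁, hc₁⟩ := exists_isColoringOn_of_perfDivOn htf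
    (hG.2 (C ∪ X) ((Set.ne_univ_iff_exists_notMem _).2 ⟨b, by simpa [hbC] using hbX⟩))
  obtain ⟨c₂, hc₂⟩ := exists_isColoringOn_of_perfDivOn htf
    (hG.2 Cᶜ ((Set.ne_univ_iff_exists_notMem _).2 ⟨a, by simpa using ha⟩))
  obtain ⟨c, hc⟩ := hc₁.exists_union hc₂ (hX.subset fun v hv => hv.1.resolve_left hv.2)
    fun u hu v hv => hsep u (by simpa using hu.2) v ⟨fun hvX => hv.2 (.inr hvX), hv.1⟩
  have hcover : C ∪ X ∪ Cᶜ = Set.univ := by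
    rw [Set.union_right_comm, Set.union_compl_self, Set.univ_union]
  exact hG.1 (hcover ▸ perfDivOn_of_isColoringOn htf hc)

theorem stmt_10 [Fintype V] (G : SimpleGraph V) (hG : MNPD G)
    (htf : G.CliqueFree 3) (hc : G.Connected) :
    ¬ ∃ X : Set V, G.IsClique X ∧ ¬ (G.induce Xᶜ).Preconnected :=
  stmt_10_general G hG htf
end
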